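/- arXiv:2301.07574 — 2 statements merged into one kernel-verified Lean document; each statement's English description precedes it below -/
import Mathlib

section
/- Let 0 < θ₂ < θ₁ < θ ≤ 1, let T > 0, and let w ∈ C([0,T]) be a positive function. Fix T₁ with 0 < T₁ < min{T, (θ₁ Γ(1+θ₁−θ₂)/θ₂)^{1/(θ₁−θ₂)}}. Then θ₁ I_t^1 w(t) − θ₂ I_t^{1+θ₁−θ₂} w(t) ≥ 0 for every t ∈ [0,T₁]. -/
open MeasureTheory

/-- `ω_θ(t) = t^{θ-1}/Γ(θ)`. -/
noncomputable def omegaK (θ t : ℝ) : ℝ := t ^ (θ - 1) / Real.Gamma θ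

/-- time convolution `(f * g)(t) = ∫_0^t f(t-s) g(s) ds`. -/
noncomputable def tconv (f g : ℝ → ℝ) (t : ℝ) : ℝ := ∫ s in (0:ℝ)..t, f (t - s) * g s

/-- Riemann–Liouville fractional integral `I_t^σ w`, with `I_t^0` the identity. -/
noncomputable def RLI (σ : ℝ) (w : ℝ → ℝ) (t : ℝ) : ℝ :=
  if σ = 0 then w t else ∫ s in (0:ℝ)..t, omegaK σ (t - s) * w s

/-- Riemann–Liouville fractional derivative `∂_t^θ w` of order `θ ∈ (0,1)`. -/
noncomputable def RLD (θ : ℝ) (w : ℝ → ℝ) (t : ℝ) : ℝ :=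
  deriv (fun τ => ∫ s in (0:ℝ)..τ, omegaK (1 - θ) (τ - s) * w s) t

/-- Caputo fractional derivative of order `θ ∈ (0,1]`. -/
noncomputable def caputo (θ : ℝ) (w : ℝ → ℝ) (t : ℝ) : ℝ :=
  if θ = 1 then deriv w t
  else (Real.Gamma (1 - θ))⁻¹ *
    deriv (fun τ => ∫ s in (0:ℝ)..τ, (τ - s) ^ (-θ) * (w s - w 0)) t

/-- membership in the Hölder space `C^β([0,T])`. -/
def HolderOnI (β T : ℝ) (w : ℝ → ℝ) : Prop :=
  ContinuousOn w (Set.Icc 0 T) ∧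
    ∃ C : ℝ, ∀ t₁ ∈ Set.Icc (0:ℝ) T, ∀ t₂ ∈ Set.Icc (0:ℝ) T,
      |w t₁ - w t₂| ≤ C * |t₁ - t₂| ^ β

/-- the kernel `N_θ(t) = ω_{1-θ₁}(t) - ω_{1-θ₂}(t)`. -/
noncomputable def Nker (θ₁ θ₂ t : ℝ) : ℝ := omegaK (1 - θ₁) t - omegaK (1 - θ₂) t

/-! On `[0, T₁]` the kernel of `I^{1+θ₁-θ₂}` obeys
`θ₂ ω_{1+θ₁-θ₂}(τ) = θ₂ τ^{θ₁-θ₂} / Γ(1+θ₁-θ₂) ≤ θ₁` by the choice of `T₁`, while `I^1` has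
kernel `1`; integrating this kernel inequality against `w ≥ 0` gives the claim. -/

open Set

lemma continuous_omegaK {σ : ℝ} (hσ : 1 ≤ σ) : Continuous (omegaK σ) :=
  (Real.continuous_rpow_const (by linarith)).div_const _

lemma omegaK_one_add_le {α c τ : ℝ} (hα : 0 < α) (hc : 0 ≤ c) (hτ : 0 ≤ τ)
    (hτc : τ ≤ (c * Real.Gamma (1 + α)) ^ (1 / α)) : omegaK (1 + α) τ ≤ c := by
  have hΓ : 0 < Real.Gamma (1 + α) := Real.Gamma_pos_of_pos (by linarith)
  rw [one_div, Real.le_rpow_inv_iff_of_pos hτ (by positivity) hα] at hτc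
  rwa [omegaK, add_sub_cancel_left, div_le_iff₀ hΓ]

lemma RLI_one (w : ℝ → ℝ) (t : ℝ) : RLI 1 w t = ∫ s in (0:ℝ)..t, w s := by
  simp [RLI, omegaK]

lemma RLI_le_mul_RLI_one {σ c t : ℝ} {w : ℝ → ℝ} (hσ : 1 ≤ σ) (ht : 0 ≤ t)
    (hw : ContinuousOn w (Icc 0 t)) (hw₀ : ∀ s ∈ Icc 0 t, 0 ≤ w s)
    (hk : ∀ τ ∈ Icc 0 t, omegaK σ τ ≤ c) : RLI σ w t ≤ c * RLI 1 w t := by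
  have hkernel : ContinuousOn (fun s => omegaK σ (t - s)) (Icc 0 t) :=
    ((continuous_omegaK hσ).comp (continuous_sub_left t)).continuousOn
  rw [RLI, if_neg (by linarith), RLI_one, ← intervalIntegral.integral_const_mul]
  refine intervalIntegral.integral_mono_on ht ((hkernel.mul hw).intervalIntegrable_of_Icc ht)
    ((hw.const_smul c).intervalIntegrable_of_Icc ht) fun s hs => ?_
  exact mul_le_mul_of_nonneg_right (hk _ ⟨by linarith [hs.2], by linarith [hs.1]⟩) (hw₀ s hs)

theorem stmt6_general (θ₁ θ₂ T T₁ : ℝ)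
    (hθ₂ : 0 < θ₂) (hθ₂₁ : θ₂ < θ₁)
    (w : ℝ → ℝ) (hwc : ContinuousOn w (Set.Icc 0 T))
    (hwpos : ∀ t ∈ Set.Icc (0:ℝ) T, 0 < w t)
    (hT₁lt : T₁ < min T ((θ₁ * Real.Gamma (1 + θ₁ - θ₂) / θ₂) ^ (1 / (θ₁ - θ₂)))) :
    ∀ t ∈ Set.Icc (0:ℝ) T₁, 0 ≤ θ₁ * RLI 1 w t - θ₂ * RLI (1 + θ₁ - θ₂) w t := by
  obtain ⟨hT₁T, hT₁Γ⟩ := lt_min_iff.mp hT₁lt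
  rintro t ⟨ht₀, htT₁⟩
  have hsub : Icc 0 t ⊆ Icc 0 T := Icc_subset_Icc_right (by linarith)
  have hkernel : ∀ τ ∈ Icc 0 t, omegaK (1 + (θ₁ - θ₂)) τ ≤ θ₁ / θ₂ := fun τ hτ =>
    omegaK_one_add_le (sub_pos.mpr hθ₂₁) (div_nonneg (by linarith) hθ₂.le) hτ.1
      (by rw [div_mul_eq_mul_div, ← add_sub_assoc]; linarith [hτ.2])
  have hcompare := RLI_le_mul_RLI_one (by linarith) ht₀ (hwc.mono hsub)
    (fun s hs => (hwpos s (hsub hs)).le) hkernel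
  rw [← add_sub_assoc, div_mul_eq_mul_div, le_div_iff₀' hθ₂] at hcompare
  linarith

/-- Corollary 5.1, first inequality: positivity of `θ₁ I_t^1 w - θ₂ I_t^{1+θ₁-θ₂} w`
on `[0,T₁]`. -/
theorem stmt6 (θ θ₁ θ₂ T T₁ : ℝ)
    (hθ₂ : 0 < θ₂) (hθ₂₁ : θ₂ < θ₁) (hθ₁θ : θ₁ < θ) (hθ : θ ≤ 1) (hT : 0 < T)
    (w : ℝ → ℝ) (hwc : ContinuousOn w (Set.Icc 0 T))
    (hwpos : ∀ t ∈ Set.Icc (0:ℝ) T, 0 < w t)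
    (hT₁ : 0 < T₁)
    (hT₁lt : T₁ < min T ((θ₁ * Real.Gamma (1 + θ₁ - θ₂) / θ₂) ^ (1 / (θ₁ - θ₂)))) :
    ∀ t ∈ Set.Icc (0:ℝ) T₁, 0 ≤ θ₁ * RLI 1 w t - θ₂ * RLI (1 + θ₁ - θ₂) w t :=
  stmt6_general θ₁ θ₂ T T₁ hθ₂ hθ₂₁ w hwc hwpos hT₁lt
end

section
/- Let 0 < θ₂ < θ₁ < θ ≤ 1, let T > 0, and let w ∈ C([0,T]) be a positive function. Fix T₂ with 0 < T₂ < min{T, (θ₁ Γ(1+θ−θ₂)/(θ₂ Γ(1+θ−θ₁)))^{1/(θ₁−θ₂)}}. Then θ₁ I_t^{1+θ−θ₁} w(t) − θ₂ I_t^{1+θ−θ₂} w(t) ≥ 0 for every t ∈ [0,T₂]. -/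
/-!
Both fractional integrals have kernels ω_σ(u) = u^{σ-1}/Γ(σ), and for orders α < β one has
c₂ ω_β(u) = (c₂ u^{β-α} Γ(α) / (c₁ Γ(β))) · c₁ ω_α(u). With α = 1+θ-θ₁, β = 1+θ-θ₂ the factor in
front is at most 1 exactly when u ≤ (θ₁ Γ(1+θ-θ₂)/(θ₂ Γ(1+θ-θ₁)))^{1/(θ₁-θ₂)}, so on [0,T₂] the
kernel of θ₂ I^{1+θ-θ₂} is dominated pointwise by that of θ₁ I^{1+θ-θ₁}, and integrating
against w ≥ 0 gives the inequality.
-/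

open MeasureTheory

section Kernel

variable {α β c₁ c₂ u : ℝ}

theorem omegaK_eq_rpow_mul (hu : 0 ≤ u) (hβ : β ≠ 1) :
    omegaK β u = u ^ (α - 1) * (u ^ (β - α) / Real.Gamma β) := by
  have hsplit : u ^ (β - 1) = u ^ (α - 1) * u ^ (β - α) := by
    rw [← Real.rpow_add' hu (by intro h; apply hβ; linarith)]
    ring_nf
  rw [omegaK, hsplit, mul_div_assoc]

theorem mul_omegaK_le_mul_omegaK (hu : 0 ≤ u) (hβ : β ≠ 1)
    (h : c₂ * (u ^ (β - α) / Real.Gamma β) ≤ c₁ / Real.Gamma α) :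
    c₂ * omegaK β u ≤ c₁ * omegaK α u := by
  calc c₂ * omegaK β u = u ^ (α - 1) * (c₂ * (u ^ (β - α) / Real.Gamma β)) := by
        rw [omegaK_eq_rpow_mul hu hβ]; ring
    _ ≤ u ^ (α - 1) * (c₁ / Real.Gamma α) :=
        mul_le_mul_of_nonneg_left h (Real.rpow_nonneg hu _)
    _ = c₁ * omegaK α u := by rw [omegaK]; ring

theorem mul_omegaK_le_mul_omegaK_of_le_rpow (hα : 0 < α) (hαβ : α < β) (hβ : β ≠ 1)
    (hc₁ : 0 ≤ c₁) (hc₂ : 0 < c₂) (hu : 0 ≤ u)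
    (huR : u ≤ (c₁ * Real.Gamma β / (c₂ * Real.Gamma α)) ^ (1 / (β - α))) :
    c₂ * omegaK β u ≤ c₁ * omegaK α u := by
  have hΓα : 0 < Real.Gamma α := Real.Gamma_pos_of_pos hα
  have hΓβ : 0 < Real.Gamma β := Real.Gamma_pos_of_pos (hα.trans hαβ)
  rw [one_div, Real.le_rpow_inv_iff_of_pos hu (by positivity) (sub_pos.2 hαβ),
    le_div_iff₀ (by positivity)] at huR
  refine mul_omegaK_le_mul_omegaK hu hβ ?_
  rw [← mul_div_assoc, div_le_div_iff₀ hΓβ hΓα]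
  linarith

end Kernel

section Integral

variable {σ τ c₁ c₂ t : ℝ} {w : ℝ → ℝ}

theorem intervalIntegrable_omegaK_mul (hσ : 1 ≤ σ) (ht : 0 ≤ t)
    (hw : ContinuousOn w (Set.Icc 0 t)) :
    IntervalIntegrable (fun s => omegaK σ (t - s) * w s) volume 0 t := by
  refine ContinuousOn.intervalIntegrable_of_Icc ht (ContinuousOn.mul ?_ hw)
  exact (((Real.continuous_rpow_const (sub_nonneg.2 hσ)).comp
    (continuous_const.sub continuous_id)).div_const _).continuousOn

theorem mul_RLI_le_mul_RLI (hσ : 1 ≤ σ) (hτ : 1 ≤ τ) (ht : 0 ≤ t)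
    (hw : ContinuousOn w (Set.Icc 0 t)) (hw₀ : ∀ s ∈ Set.Icc 0 t, 0 ≤ w s)
    (hk : ∀ u ∈ Set.Icc 0 t, c₂ * omegaK τ u ≤ c₁ * omegaK σ u) :
    c₂ * RLI τ w t ≤ c₁ * RLI σ w t := by
  rw [RLI, RLI, if_neg (by linarith), if_neg (by linarith),
    ← intervalIntegral.integral_const_mul, ← intervalIntegral.integral_const_mul]
  refine intervalIntegral.integral_mono_on ht
    ((intervalIntegrable_omegaK_mul hτ ht hw).const_mul c₂)
    ((intervalIntegrable_omegaK_mul hσ ht hw).const_mul c₁) fun s hs => ?_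
  have hu : t - s ∈ Set.Icc 0 t := ⟨by linarith [hs.2], by linarith [hs.1]⟩
  rw [← mul_assoc, ← mul_assoc]
  exact mul_le_mul_of_nonneg_right (hk _ hu) (hw₀ s hs)

end Integral

theorem stmt7_general (θ θ₁ θ₂ T T₂ : ℝ)
    (hθ₂ : 0 < θ₂) (hθ₂₁ : θ₂ < θ₁) (hθ₁θ : θ₁ < θ)
    (w : ℝ → ℝ) (hwc : ContinuousOn w (Set.Icc 0 T))
    (hwpos : ∀ t ∈ Set.Icc (0:ℝ) T, 0 < w t)
    (hT₂lt : T₂ < min T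
      ((θ₁ * Real.Gamma (1 + θ - θ₂) / (θ₂ * Real.Gamma (1 + θ - θ₁))) ^ (1 / (θ₁ - θ₂)))) :
    ∀ t ∈ Set.Icc (0:ℝ) T₂,
      0 ≤ θ₁ * RLI (1 + θ - θ₁) w t - θ₂ * RLI (1 + θ - θ₂) w t := by
  intro t ht
  have hsub : Set.Icc 0 t ⊆ Set.Icc 0 T :=
    Set.Icc_subset_Icc le_rfl (ht.2.trans (hT₂lt.trans_le (min_le_left _ _)).le)
  have hkernel : ∀ u ∈ Set.Icc 0 t,
      θ₂ * omegaK (1 + θ - θ₂) u ≤ θ₁ * omegaK (1 + θ - θ₁) u := by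
    intro u hu
    refine mul_omegaK_le_mul_omegaK_of_le_rpow (by linarith) (by linarith) (by linarith)
      (by linarith) hθ₂ hu.1 ?_
    rw [show 1 + θ - θ₂ - (1 + θ - θ₁) = θ₁ - θ₂ by ring]
    linarith [hu.2, ht.2, min_le_right T
      ((θ₁ * Real.Gamma (1 + θ - θ₂) / (θ₂ * Real.Gamma (1 + θ - θ₁))) ^ (1 / (θ₁ - θ₂)))]
  exact sub_nonneg.2 <| mul_RLI_le_mul_RLI (by linarith) (by linarith) ht.1 (hwc.mono hsub)
    (fun s hs => (hwpos s (hsub hs)).le) hkernel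

/-- Corollary 5.1, second inequality: positivity of
`θ₁ I_t^{1+θ-θ₁} w - θ₂ I_t^{1+θ-θ₂} w` on `[0,T₂]`. -/
theorem stmt7 (θ θ₁ θ₂ T T₂ : ℝ)
    (hθ₂ : 0 < θ₂) (hθ₂₁ : θ₂ < θ₁) (hθ₁θ : θ₁ < θ) (hθ : θ ≤ 1) (hT : 0 < T)
    (w : ℝ → ℝ) (hwc : ContinuousOn w (Set.Icc 0 T))
    (hwpos : ∀ t ∈ Set.Icc (0:ℝ) T, 0 < w t)
    (hT₂ : 0 < T₂)
    (hT₂lt : T₂ < min T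
      ((θ₁ * Real.Gamma (1 + θ - θ₂) / (θ₂ * Real.Gamma (1 + θ - θ₁))) ^ (1 / (θ₁ - θ₂)))) :
    ∀ t ∈ Set.Icc (0:ℝ) T₂,
      0 ≤ θ₁ * RLI (1 + θ - θ₁) w t - θ₂ * RLI (1 + θ - θ₂) w t :=
  stmt7_general θ θ₁ θ₂ T T₂ hθ₂ hθ₂₁ hθ₁θ w hwc hwpos hT₂lt
end
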